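/- Let p ∈ (1,∞), let A ⊆ L(L^p(μ)) be an algebra with isometric automorphism φ_A, and let c_A, v_A, φ_A^∞ be as above on L^p(ν × μ). For a, b ∈ A define Θ_A(ab)(x⊗ξ) = Σ_{n≥1} x(n)δ_n ⊗ φ_A^{n−1}(ab)ξ. Then c_A(a)v_A(b) = Θ_A(ab). Moreover, for any a ∈ A with factorization a = a₀a₁, φ_A^∞(a) − Θ_A(φ_A(a)) equals the operator θ (x⊗ξ) = x(0)δ₀ ⊗ aξ, i.e., the rank-one-in-the-first-coordinate operator (δ₀ ⊗ a₀)(δ₀ ⊗ a₁). -/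

import Mathlib

/-! Both identities are checked coordinatewise, at index `0` and at index `n + 1`; the only
algebra needed is that the iterates of `φ` remain multiplicative on `A`, so that
`φ^[n] (a * b) = φ^[n] a ∘ φ^[n] b`. -/

open MeasureTheory
open scoped ENNReal

theorem iterate_map_mul_of_mapsTo {M : Type*} [Mul M] {s : Set M} {f : M → M}
    (hf : Set.MapsTo f s s) (hf_mul : ∀ a ∈ s, ∀ b ∈ s, f (a * b) = f a * f b) (n : ℕ) :
    ∀ a ∈ s, ∀ b ∈ s, f^[n] (a * b) = f^[n] a * f^[n] b := by
  induction n with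
  | zero => simp
  | succ n ih =>
    intro a ha b hb
    simp only [Function.iterate_succ_apply, hf_mul a ha b hb]
    exact ih _ (hf ha) _ (hf hb)

theorem lp.continuousLinearMap_ext_zero_succ {𝕜 F : Type*} {E : ℕ → Type*} [NormedField 𝕜]
    [∀ n, NormedAddCommGroup (E n)] [∀ n, NormedSpace 𝕜 (E n)]
    [NormedAddCommGroup F] [NormedSpace 𝕜 F] {p : ℝ≥0∞} [Fact (1 ≤ p)]
    {T S : F →L[𝕜] lp E p} (h_zero : ∀ x, T x 0 = S x 0)
    (h_succ : ∀ x n, T x (n + 1) = S x (n + 1)) : T = S := by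
  refine ContinuousLinearMap.ext fun x => lp.ext (funext fun n => ?_)
  cases n with
  | zero => exact h_zero x
  | succ n => exact h_succ x n

theorem creation_annihilation_theta_covariance_general
    {Ω : Type*} [MeasurableSpace Ω] (μ : Measure Ω)
    (p : ℝ≥0∞) [Fact (1 ≤ p)]
    (A : Set (Lp ℂ p μ →L[ℂ] Lp ℂ p μ))
    (hAmul : ∀ a ∈ A, ∀ b ∈ A, a * b ∈ A)
    (φ : (Lp ℂ p μ →L[ℂ] Lp ℂ p μ) → (Lp ℂ p μ →L[ℂ] Lp ℂ p μ))
    (hφA : ∀ a ∈ A, φ a ∈ A)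
    (hφ_mul : ∀ a ∈ A, ∀ b ∈ A, φ (a * b) = φ a * φ b)
    (Φ C V Θ : (Lp ℂ p μ →L[ℂ] Lp ℂ p μ) →
        (lp (fun _ : ℕ => Lp ℂ p μ) p →L[ℂ] lp (fun _ : ℕ => Lp ℂ p μ) p))
    (hΦ : ∀ a ∈ A, ∀ (ξ : lp (fun _ : ℕ => Lp ℂ p μ) p) (n : ℕ),
      (Φ a ξ) n = (φ^[n] a) (ξ n))
    (hCzero : ∀ a ∈ A, ∀ ξ : lp (fun _ : ℕ => Lp ℂ p μ) p, (C a ξ) 0 = 0)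
    (hCsucc : ∀ a ∈ A, ∀ (ξ : lp (fun _ : ℕ => Lp ℂ p μ) p) (n : ℕ),
      (C a ξ) (n + 1) = (φ^[n] a) (ξ n))
    (hVf : ∀ b ∈ A, ∀ (ξ : lp (fun _ : ℕ => Lp ℂ p μ) p) (n : ℕ),
      (V b ξ) n = (φ^[n] b) (ξ (n + 1)))
    (hΘzero : ∀ c ∈ A, ∀ ξ : lp (fun _ : ℕ => Lp ℂ p μ) p, (Θ c ξ) 0 = 0)
    (hΘsucc : ∀ c ∈ A, ∀ (ξ : lp (fun _ : ℕ => Lp ℂ p μ) p) (n : ℕ),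
      (Θ c ξ) (n + 1) = (φ^[n] c) (ξ (n + 1))) :
    -- `c_A(a) v_A(b) = Θ_A(ab)`
    (∀ a ∈ A, ∀ b ∈ A, C a ∘L V b = Θ (a * b)) ∧
    -- `φ_A^∞(a) − Θ_A(φ_A(a))` is the rank-one-in-the-first-coordinate operator
    (∀ a₀ ∈ A, ∀ a₁ ∈ A,
      ∀ D : lp (fun _ : ℕ => Lp ℂ p μ) p →L[ℂ] lp (fun _ : ℕ => Lp ℂ p μ) p,
        (∀ ξ : lp (fun _ : ℕ => Lp ℂ p μ) p,
          (D ξ) 0 = a₀ (a₁ (ξ 0)) ∧ ∀ n : ℕ, (D ξ) (n + 1) = 0) →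
        Φ (a₀ * a₁) - Θ (φ (a₀ * a₁)) = D) := by
  refine ⟨fun a ha b hb => ?_, fun a₀ ha₀ a₁ ha₁ D hD => ?_⟩
  · have hab := hAmul a ha b hb
    refine lp.continuousLinearMap_ext_zero_succ (fun ξ => ?_) (fun ξ n => ?_)
    · rw [ContinuousLinearMap.comp_apply, hCzero a ha, hΘzero _ hab]
    · rw [ContinuousLinearMap.comp_apply, hCsucc a ha, hVf b hb, hΘsucc _ hab,
        iterate_map_mul_of_mapsTo hφA hφ_mul n a ha b hb,
        mul_apply_eq_comp]
  · have ha := hAmul a₀ ha₀ a₁ ha₁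
    refine lp.continuousLinearMap_ext_zero_succ (fun ξ => ?_) (fun ξ n => ?_)
    · rw [sub_apply, lp.coeFn_sub, Pi.sub_apply, hΦ _ ha,
        hΘzero _ (hφA _ ha), (hD ξ).1, sub_zero,
        Function.iterate_zero_apply, mul_apply_eq_comp]
    · rw [sub_apply, lp.coeFn_sub, Pi.sub_apply, hΦ _ ha,
        hΘsucc _ (hφA _ ha), (hD ξ).2 n, Function.iterate_succ_apply, sub_self]

/-- With the Fock-type operators on
`L^p(ν × μ) = ℓ^p(ℤ_{≥0}) ⊗_p L^p(μ)` given componentwise by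
`(c_A(a)ξ)_0 = 0`, `(c_A(a)ξ)_{n+1} = φ_A^n(a)(ξ_n)`,
`(v_A(b)ξ)_n = φ_A^n(b)(ξ_{n+1})`, `(φ_A^∞(a)ξ)_n = φ_A^n(a)(ξ_n)` and
`(Θ_A(c)ξ)_0 = 0`, `(Θ_A(c)ξ)_{n+1} = φ_A^n(c)(ξ_{n+1})`, one has
`c_A(a)v_A(b) = Θ_A(ab)`; moreover for any `a ∈ A` with factorization `a = a₀a₁`,
`φ_A^∞(a) − Θ_A(φ_A(a))` is the operator `ξ ↦ x(0)δ₀ ⊗ aξ`, i.e. the rank-one-in-the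
first-coordinate operator `(δ₀ ⊗ a₀)(δ₀ ⊗ a₁)`. -/
theorem creation_annihilation_theta_covariance
    {Ω : Type*} [MeasurableSpace Ω] (μ : Measure Ω)
    (p : ℝ≥0∞) [Fact (1 ≤ p)] (hp : 1 < p) (hp' : p ≠ ∞)
    (A : Set (Lp ℂ p μ →L[ℂ] Lp ℂ p μ))
    (hAmul : ∀ a ∈ A, ∀ b ∈ A, a * b ∈ A)
    (φ : (Lp ℂ p μ →L[ℂ] Lp ℂ p μ) → (Lp ℂ p μ →L[ℂ] Lp ℂ p μ))
    (hφA : ∀ a ∈ A, φ a ∈ A)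
    (hφ_mul : ∀ a ∈ A, ∀ b ∈ A, φ (a * b) = φ a * φ b)
    (Φ C V Θ : (Lp ℂ p μ →L[ℂ] Lp ℂ p μ) →
        (lp (fun _ : ℕ => Lp ℂ p μ) p →L[ℂ] lp (fun _ : ℕ => Lp ℂ p μ) p))
    (hΦ : ∀ a ∈ A, ∀ (ξ : lp (fun _ : ℕ => Lp ℂ p μ) p) (n : ℕ),
      (Φ a ξ) n = (φ^[n] a) (ξ n))
    (hCzero : ∀ a ∈ A, ∀ ξ : lp (fun _ : ℕ => Lp ℂ p μ) p, (C a ξ) 0 = 0)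
    (hCsucc : ∀ a ∈ A, ∀ (ξ : lp (fun _ : ℕ => Lp ℂ p μ) p) (n : ℕ),
      (C a ξ) (n + 1) = (φ^[n] a) (ξ n))
    (hVf : ∀ b ∈ A, ∀ (ξ : lp (fun _ : ℕ => Lp ℂ p μ) p) (n : ℕ),
      (V b ξ) n = (φ^[n] b) (ξ (n + 1)))
    (hΘzero : ∀ c ∈ A, ∀ ξ : lp (fun _ : ℕ => Lp ℂ p μ) p, (Θ c ξ) 0 = 0)
    (hΘsucc : ∀ c ∈ A, ∀ (ξ : lp (fun _ : ℕ => Lp ℂ p μ) p) (n : ℕ),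
      (Θ c ξ) (n + 1) = (φ^[n] c) (ξ (n + 1))) :
    -- `c_A(a) v_A(b) = Θ_A(ab)`
    (∀ a ∈ A, ∀ b ∈ A, C a ∘L V b = Θ (a * b)) ∧
    -- `φ_A^∞(a) − Θ_A(φ_A(a))` is the rank-one-in-the-first-coordinate operator
    (∀ a₀ ∈ A, ∀ a₁ ∈ A,
      ∀ D : lp (fun _ : ℕ => Lp ℂ p μ) p →L[ℂ] lp (fun _ : ℕ => Lp ℂ p μ) p,
        (∀ ξ : lp (fun _ : ℕ => Lp ℂ p μ) p,
          (D ξ) 0 = a₀ (a₁ (ξ 0)) ∧ ∀ n : ℕ, (D ξ) (n + 1) = 0) →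
        Φ (a₀ * a₁) - Θ (φ (a₀ * a₁)) = D) :=
  creation_annihilation_theta_covariance_general μ p A hAmul φ hφA hφ_mul Φ C V Θ hΦ hCzero hCsucc
    hVf hΘzero hΘsucc
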